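/- Let A_n ∈ ℝ^{d×d}, n ∈ ℕ, be invertible matrices with solution operator Φ, and let V, W ⊆ ℝ^d be subspaces with dim V = dim W = s. Assume there exist constants C ≥ 0, q ∈ [0,1) and an index J ∈ ℕ such that ∠(Φ(j,0)V, Φ(j,0)W) ≤ C q^j for all j ≥ J. Then with a_{1,n}(U) := Σ_{j=1}^{n} ∠(Φ(j−1,0)U, Φ(j,0)U) one has limsup_{n→∞} (1/n) a_{1,n}(V) = limsup_{n→∞} (1/n) a_{1,n}(W), and the same identity holds with liminf in place of limsup. -/

import Mathlib

/-!
With `cos ∠(V, W) = min {‖P_W v‖ : v ∈ V, ‖v‖ = 1}`, the largest principal angle inherits the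
triangle inequality from angles between vectors (go from a worst unit `u ∈ U` to its closest unit
vector `v ∈ V`, then to the closest unit vector of `W`), and it is symmetric on subspaces of equal
dimension. Hence the `j`-th summands of `a_{1,n}(V)` and `a_{1,n}(W)` differ by at most
`∠(Φ(j-1,0)V, Φ(j-1,0)W) + ∠(Φ(j,0)V, Φ(j,0)W)`, which is summable by the geometric decay. The
angle sums therefore differ by a bounded amount, their averages by `O(1/n)`, and averages bounded
by `π` whose difference tends to `0` have the same `limsup` and `liminf`.
-/

open Filter

noncomputable section

abbrev Euc (d : ℕ) := EuclideanSpace ℝ (Fin d)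

/-- Angle between the lines spanned by two vectors. -/
noncomputable def vecAngle {d : ℕ} (v w : Euc d) : ℝ :=
  Real.arccos (|(inner ℝ v w : ℝ)| / (‖v‖ * ‖w‖))

/-- Largest principal angle between two subspaces of equal dimension. -/
noncomputable def subAngle {d : ℕ} (V W : Submodule ℝ (Euc d)) : ℝ :=
  Real.arccos (sInf {c : ℝ | ∃ v ∈ V, ‖v‖ = 1 ∧
    c = sSup {r : ℝ | ∃ w ∈ W, ‖w‖ = 1 ∧ r = (inner ℝ v w : ℝ)}})

/-- Forward product `A (m+n-1) ⋯ A m`. -/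
noncomputable def PhiF {d : ℕ} (A : ℕ → (Euc d →L[ℝ] Euc d)) (m : ℕ) : ℕ → (Euc d →L[ℝ] Euc d)
  | 0 => 1
  | n + 1 => A (m + n) ∘L PhiF A m n

/-- Solution operator `Φ(n,m) = A_{n-1} ⋯ A_m` for `n ≥ m`,
`Φ(n,m) = A_n⁻¹ ⋯ A_{m-1}⁻¹` for `n < m`. -/
noncomputable def Phi {d : ℕ} (A : ℕ → (Euc d →L[ℝ] Euc d)) (n m : ℕ) : Euc d →L[ℝ] Euc d :=
  if m ≤ n then PhiF A m (n - m) else Ring.inverse (PhiF A n (m - n))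

/-- `a_{m,n}(V) = Σ_{j=m}^n ∠(Φ(j-1,0)V, Φ(j,0)V)`. -/
noncomputable def angSum {d : ℕ} (A : ℕ → (Euc d →L[ℝ] Euc d)) (V : Submodule ℝ (Euc d))
    (m n : ℕ) : ℝ :=
  ∑ j ∈ Finset.Icc m n, subAngle (V.map (Phi A (j - 1) 0 : Euc d →ₗ[ℝ] Euc d)) (V.map (Phi A j 0 : Euc d →ₗ[ℝ] Euc d))

open InnerProductGeometry
open scoped InnerProductSpace Topology

section Projection

variable {E : Type*} [NormedAddCommGroup E] [InnerProductSpace ℝ E]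

theorem Submodule.exists_mem_norm_eq_one {K : Submodule ℝ E} (hK : K ≠ ⊥) :
    ∃ x ∈ K, ‖x‖ = 1 := by
  obtain ⟨x, hxK, hx0⟩ := Submodule.exists_mem_ne_zero_of_ne_bot hK
  exact ⟨‖x‖⁻¹ • x, K.smul_mem _ hxK, norm_smul_inv_norm hx0⟩

variable {K : Submodule ℝ E} [K.HasOrthogonalProjection]

theorem Submodule.real_inner_starProjection_left_of_mem (v : E) {w : E} (hw : w ∈ K) :
    ⟪K.starProjection v, w⟫_ℝ = ⟪v, w⟫_ℝ := by
  rw [K.inner_starProjection_left_eq_right, K.starProjection_eq_self_iff.2 hw]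

theorem Submodule.real_inner_le_norm_starProjection (v : E) {w : E} (hw : w ∈ K)
    (hw1 : ‖w‖ = 1) : ⟪v, w⟫_ℝ ≤ ‖K.starProjection v‖ := by
  simpa [K.real_inner_starProjection_left_of_mem v hw, hw1] using
    real_inner_le_norm (K.starProjection v) w

theorem Submodule.exists_real_inner_eq_norm_starProjection (hK : K ≠ ⊥) (v : E) :
    ∃ w ∈ K, ‖w‖ = 1 ∧ ⟪v, w⟫_ℝ = ‖K.starProjection v‖ := by
  by_cases h0 : K.starProjection v = 0
  · obtain ⟨x, hxK, hx1⟩ := Submodule.exists_mem_norm_eq_one hK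
    refine ⟨x, hxK, hx1, ?_⟩
    rw [← K.real_inner_starProjection_left_of_mem v hxK, h0, inner_zero_left, norm_zero]
  · have hmem := K.smul_mem ‖K.starProjection v‖⁻¹ (K.starProjection_apply_mem v)
    refine ⟨_, hmem, norm_smul_inv_norm h0, ?_⟩
    rw [← K.real_inner_starProjection_left_of_mem v hmem, real_inner_smul_right,
      real_inner_self_eq_norm_sq]
    field_simp

theorem Submodule.sSup_real_inner_eq_norm_starProjection (hK : K ≠ ⊥) (v : E) :
    sSup {r : ℝ | ∃ w ∈ K, ‖w‖ = 1 ∧ r = ⟪v, w⟫_ℝ} = ‖K.starProjection v‖ := by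
  refine IsGreatest.csSup_eq ⟨?_, ?_⟩
  · obtain ⟨w, hwK, hw1, hw⟩ := K.exists_real_inner_eq_norm_starProjection hK v
    exact ⟨w, hwK, hw1, hw.symm⟩
  · rintro r ⟨w, hwK, hw1, rfl⟩
    exact K.real_inner_le_norm_starProjection v hwK hw1

end Projection

section FiniteDimensional

variable {E : Type*} [NormedAddCommGroup E] [InnerProductSpace ℝ E]
  {V W : Submodule ℝ E} [FiniteDimensional ℝ V] [FiniteDimensional ℝ W]

/-- `P_V : W → V` is injective, hence onto as `dim V = dim W`; writing a unit `v ∈ V` as `P_V w`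
gives `1 = ⟪v, w⟫ = ⟪P_W v, w⟫ ≤ ‖P_W v‖ ‖w‖ ≤ ‖P_W v‖ / c`. -/
theorem Submodule.le_norm_starProjection_of_finrank_eq
    (hdim : Module.finrank ℝ V = Module.finrank ℝ W) {c : ℝ} (hc : 0 < c)
    (h : ∀ w ∈ W, ‖w‖ = 1 → c ≤ ‖V.starProjection w‖)
    {v : E} (hv : v ∈ V) (hv1 : ‖v‖ = 1) : c ≤ ‖W.starProjection v‖ := by
  have hscale : ∀ w ∈ W, c * ‖w‖ ≤ ‖V.starProjection w‖ := by
    intro w hw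
    rcases eq_or_ne w 0 with rfl | hw0
    · simp
    have := h _ (W.smul_mem ‖w‖⁻¹ hw) (norm_smul_inv_norm hw0)
    rw [map_smul, norm_smul, norm_inv, norm_norm, inv_mul_eq_div, le_div_iff₀ (norm_pos_iff.2 hw0)]
      at this
    linarith
  let S : W →ₗ[ℝ] V := (V.orthogonalProjectionOnto : E →ₗ[ℝ] V) ∘ₗ W.subtype
  have hS : ∀ w : W, (S w : E) = V.starProjection w := fun w => rfl
  have hS_inj : Function.Injective S := by
    refine (injective_iff_map_eq_zero S).2 fun w hw => ?_
    have := hscale w w.2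
    rw [← hS, hw, ZeroMemClass.coe_zero, norm_zero] at this
    exact norm_le_zero_iff.1 (nonpos_of_mul_nonpos_right this hc) |> Subtype.ext
  obtain ⟨w, hw⟩ := (LinearMap.injective_iff_surjective_of_finrank_eq_finrank hdim.symm).1 hS_inj
    ⟨v, hv⟩
  have hPw : V.starProjection w = v := by rw [← hS, hw]
  have hinner : 1 ≤ ‖W.starProjection v‖ * ‖(w : E)‖ := by
    calc (1 : ℝ) = ⟪V.starProjection w, v⟫_ℝ := by
          rw [hPw, real_inner_self_eq_norm_sq, hv1, one_pow]
      _ = ⟪v, w⟫_ℝ := by rw [V.real_inner_starProjection_left_of_mem _ hv, real_inner_comm]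
      _ = ⟪W.starProjection v, w⟫_ℝ := (W.real_inner_starProjection_left_of_mem v w.2).symm
      _ ≤ ‖W.starProjection v‖ * ‖(w : E)‖ := real_inner_le_norm _ _
  have hw_le : c * ‖(w : E)‖ ≤ 1 := by simpa [hPw, hv1] using hscale w w.2
  nlinarith [norm_nonneg (W.starProjection v), norm_nonneg (w : E)]

end FiniteDimensional

section PrincipalAngle

variable {d : ℕ}

/-- The cosine of the largest principal angle. -/
def minProjNorm (V W : Submodule ℝ (Euc d)) : ℝ :=
  sInf {c : ℝ | ∃ v ∈ V, ‖v‖ = 1 ∧ c = ‖W.starProjection v‖}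

variable {U V W : Submodule ℝ (Euc d)}

theorem subAngle_eq_arccos_minProjNorm (V : Submodule ℝ (Euc d)) (hW : W ≠ ⊥) :
    subAngle V W = Real.arccos (minProjNorm V W) := by
  simp_rw [subAngle, W.sSup_real_inner_eq_norm_starProjection hW, minProjNorm]

theorem minProjNorm_nonneg : 0 ≤ minProjNorm V W :=
  Real.sInf_nonneg (by rintro _ ⟨v, -, -, rfl⟩; exact norm_nonneg _)

theorem minProjNorm_le {v : Euc d} (hv : v ∈ V) (hv1 : ‖v‖ = 1) :
    minProjNorm V W ≤ ‖W.starProjection v‖ :=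
  csInf_le ⟨0, by rintro _ ⟨v, -, -, rfl⟩; exact norm_nonneg _⟩ ⟨v, hv, hv1, rfl⟩

theorem le_minProjNorm (hV : V ≠ ⊥) {c : ℝ} (h : ∀ v ∈ V, ‖v‖ = 1 → c ≤ ‖W.starProjection v‖) :
    c ≤ minProjNorm V W := by
  obtain ⟨v, hv, hv1⟩ := Submodule.exists_mem_norm_eq_one hV
  exact le_csInf ⟨_, v, hv, hv1, rfl⟩ (by rintro _ ⟨v, hv, hv1, rfl⟩; exact h v hv hv1)

theorem exists_norm_starProjection_eq_minProjNorm (hV : V ≠ ⊥) :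
    ∃ v ∈ V, ‖v‖ = 1 ∧ ‖W.starProjection v‖ = minProjNorm V W := by
  have hset : {c : ℝ | ∃ v ∈ V, ‖v‖ = 1 ∧ c = ‖W.starProjection v‖} =
      (fun v => ‖W.starProjection v‖) '' ((V : Set (Euc d)) ∩ Metric.sphere 0 1) := by
    ext c
    simp [eq_comm, and_assoc]
  have hcompact : IsCompact ((fun v => ‖W.starProjection v‖) ''
      ((V : Set (Euc d)) ∩ Metric.sphere 0 1)) :=
    ((isCompact_sphere 0 1).inter_left V.closed_of_finiteDimensional).image (by fun_prop)
  obtain ⟨v₀, hv₀, hv₀1⟩ := Submodule.exists_mem_norm_eq_one hV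
  rw [minProjNorm, hset]
  obtain ⟨v, ⟨hv, hv1⟩, hmin⟩ := hcompact.sInf_mem ⟨_, v₀, ⟨hv₀, by simpa using hv₀1⟩, rfl⟩
  exact ⟨v, hv, by simpa using hv1, hmin⟩

theorem subAngle_triangle (hU : U ≠ ⊥) (hV : V ≠ ⊥) (hW : W ≠ ⊥) :
    subAngle U W ≤ subAngle U V + subAngle V W := by
  obtain ⟨u, hu, hu1, hmin⟩ := exists_norm_starProjection_eq_minProjNorm (W := W) hU
  obtain ⟨v, hv, hv1, huv⟩ := V.exists_real_inner_eq_norm_starProjection hV u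
  obtain ⟨w, hw, hw1, hvw⟩ := W.exists_real_inner_eq_norm_starProjection hW v
  have angle_eq : ∀ {x y : Euc d}, ‖x‖ = 1 → ‖y‖ = 1 → angle x y = Real.arccos ⟪x, y⟫_ℝ :=
    fun hx hy => by simp [angle, hx, hy]
  rw [subAngle_eq_arccos_minProjNorm U hW, subAngle_eq_arccos_minProjNorm U hV,
    subAngle_eq_arccos_minProjNorm V hW, ← hmin]
  calc Real.arccos ‖W.starProjection u‖
      ≤ angle u w := by
        rw [angle_eq hu1 hw1]
        exact Real.arccos_le_arccos (W.real_inner_le_norm_starProjection u hw hw1)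
    _ ≤ angle u v + angle v w := angle_le_angle_add_angle u v w
    _ = Real.arccos ‖V.starProjection u‖ + Real.arccos ‖W.starProjection v‖ := by
        rw [angle_eq hu1 hv1, angle_eq hv1 hw1, huv, hvw]
    _ ≤ Real.arccos (minProjNorm U V) + Real.arccos (minProjNorm V W) :=
        add_le_add (Real.arccos_le_arccos (minProjNorm_le hu hu1))
          (Real.arccos_le_arccos (minProjNorm_le hv hv1))

theorem minProjNorm_le_minProjNorm (hV : V ≠ ⊥)
    (hdim : Module.finrank ℝ V = Module.finrank ℝ W) : minProjNorm W V ≤ minProjNorm V W := by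
  rcases le_or_gt (minProjNorm W V) 0 with h | hc
  · exact h.trans minProjNorm_nonneg
  exact le_minProjNorm hV fun v hv hv1 => Submodule.le_norm_starProjection_of_finrank_eq hdim hc
    (fun w hw hw1 => minProjNorm_le hw hw1) hv hv1

theorem subAngle_comm (hV : V ≠ ⊥) (hW : W ≠ ⊥)
    (hdim : Module.finrank ℝ V = Module.finrank ℝ W) : subAngle V W = subAngle W V := by
  rw [subAngle_eq_arccos_minProjNorm V hW, subAngle_eq_arccos_minProjNorm W hV,
    le_antisymm (minProjNorm_le_minProjNorm hW hdim.symm) (minProjNorm_le_minProjNorm hV hdim)]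

end PrincipalAngle

section AngleSums

variable {d : ℕ}

theorem subAngle_nonneg (V W : Submodule ℝ (Euc d)) : 0 ≤ subAngle V W :=
  Real.arccos_nonneg _

theorem subAngle_le_pi (V W : Submodule ℝ (Euc d)) : subAngle V W ≤ Real.pi :=
  Real.arccos_le_pi _

theorem abs_sub_subAngle_le {V V' W W' : Submodule ℝ (Euc d)} (hV : V ≠ ⊥) (hV' : V' ≠ ⊥)
    (hW : W ≠ ⊥) (hW' : W' ≠ ⊥) (hdim : Module.finrank ℝ V = Module.finrank ℝ W)
    (hdim' : Module.finrank ℝ V' = Module.finrank ℝ W') :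
    |subAngle V V' - subAngle W W'| ≤ subAngle V W + subAngle V' W' := by
  have := subAngle_triangle hV hW hV'
  have := subAngle_triangle hW hW' hV'
  have := subAngle_triangle hW hV hW'
  have := subAngle_triangle hV hV' hW'
  have := subAngle_comm hV hW hdim
  have := subAngle_comm hV' hW' hdim'
  rw [abs_le]
  constructor <;> linarith

theorem abs_sum_subAngle_sub_le {V W : ℕ → Submodule ℝ (Euc d)} (hV : ∀ j, V j ≠ ⊥)
    (hW : ∀ j, W j ≠ ⊥) (hdim : ∀ j, Module.finrank ℝ (V j) = Module.finrank ℝ (W j))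
    (hsum : Summable fun j => subAngle (V j) (W j)) (n : ℕ) :
    |∑ j ∈ Finset.Icc 1 n, subAngle (V (j - 1)) (V j) -
        ∑ j ∈ Finset.Icc 1 n, subAngle (W (j - 1)) (W j)| ≤
      2 * ∑' j, subAngle (V j) (W j) := by
  set e : ℕ → ℝ := fun j => subAngle (V j) (W j)
  have hshift : ∑ j ∈ Finset.Icc 1 n, e (j - 1) = ∑ i ∈ Finset.range n, e i := by
    rw [← Finset.Ico_add_one_right_eq_Icc, Finset.sum_Ico_eq_sum_range]
    simp
  calc _ = |∑ j ∈ Finset.Icc 1 n, (subAngle (V (j - 1)) (V j) - subAngle (W (j - 1)) (W j))| := by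
        rw [Finset.sum_sub_distrib]
    _ ≤ ∑ j ∈ Finset.Icc 1 n, |subAngle (V (j - 1)) (V j) - subAngle (W (j - 1)) (W j)| :=
        Finset.abs_sum_le_sum_abs _ _
    _ ≤ ∑ j ∈ Finset.Icc 1 n, (e (j - 1) + e j) := Finset.sum_le_sum fun j _ =>
        abs_sub_subAngle_le (hV _) (hV _) (hW _) (hW _) (hdim _) (hdim _)
    _ = ∑ i ∈ Finset.range n, e i + ∑ j ∈ Finset.Icc 1 n, e j := by
        rw [Finset.sum_add_distrib, hshift]
    _ ≤ ∑' j, e j + ∑' j, e j :=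
        add_le_add (hsum.sum_le_tsum _ fun j _ => subAngle_nonneg _ _)
          (hsum.sum_le_tsum _ fun j _ => subAngle_nonneg _ _)
    _ = 2 * ∑' j, e j := by ring

theorem angSum_nonneg (A : ℕ → (Euc d →L[ℝ] Euc d)) (U : Submodule ℝ (Euc d)) (m n : ℕ) :
    0 ≤ angSum A U m n :=
  Finset.sum_nonneg fun _ _ => subAngle_nonneg _ _

theorem angSum_le (A : ℕ → (Euc d →L[ℝ] Euc d)) (U : Submodule ℝ (Euc d)) (m n : ℕ) :
    angSum A U m n ≤ (n + 1 - m : ℕ) * Real.pi := by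
  calc angSum A U m n ≤ ∑ _j ∈ Finset.Icc m n, Real.pi :=
        Finset.sum_le_sum fun _ _ => subAngle_le_pi _ _
    _ = (n + 1 - m : ℕ) * Real.pi := by rw [Finset.sum_const, Nat.card_Icc, nsmul_eq_mul]

theorem angSum_one_div_le_pi (A : ℕ → (Euc d →L[ℝ] Euc d)) (U : Submodule ℝ (Euc d)) (n : ℕ) :
    angSum A U 1 n / n ≤ Real.pi :=
  div_le_of_le_mul₀ n.cast_nonneg Real.pi_pos.le (by simpa [mul_comm] using angSum_le A U 1 n)

end AngleSums

section SolutionOperator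

variable {d : ℕ} {A : ℕ → (Euc d →L[ℝ] Euc d)}

theorem isUnit_PhiF (hA : ∀ n, IsUnit (A n)) (m n : ℕ) : IsUnit (PhiF A m n) := by
  induction n with
  | zero => exact isUnit_one
  | succ n ih => exact (hA (m + n)).mul ih

theorem isUnit_Phi (hA : ∀ n, IsUnit (A n)) (n m : ℕ) : IsUnit (Phi A n m) := by
  unfold Phi
  split_ifs
  · exact isUnit_PhiF hA m _
  · exact (isUnit_PhiF hA n _).ringInverse

end SolutionOperator

theorem Submodule.finrank_map_of_isUnit {E : Type*} [NormedAddCommGroup E] [NormedSpace ℝ E]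
    {T : E →L[ℝ] E} (hT : IsUnit T) (V : Submodule ℝ E) :
    Module.finrank ℝ (V.map (T : E →ₗ[ℝ] E)) = Module.finrank ℝ V := by
  obtain ⟨u, rfl⟩ := hT
  exact LinearEquiv.finrank_map_eq (ContinuousLinearEquiv.unitsEquiv ℝ E u).toLinearEquiv V

section Limits

variable {ι : Type*} {l : Filter ι} [l.NeBot] {f g : ι → ℝ}

theorem limsup_eq_limsup_of_tendsto_sub (hg : IsBoundedUnder (· ≤ ·) l g)
    (hg' : IsBoundedUnder (· ≥ ·) l g) (h : Tendsto (f - g) l (𝓝 0)) :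
    limsup f l = limsup g l := by
  have hf : f = g + (f - g) := by abel
  rw [hf]
  refine le_antisymm ?_ ?_
  · calc limsup (g + (f - g)) l ≤ limsup g l + limsup (f - g) l :=
          limsup_add_le hg' hg h.isBoundedUnder_ge.isCoboundedUnder_le h.isBoundedUnder_le
      _ = limsup g l := by rw [h.limsup_eq, add_zero]
  · calc limsup g l = limsup g l + liminf (f - g) l := by rw [h.liminf_eq, add_zero]
      _ ≤ limsup (g + (f - g)) l :=
          le_limsup_add hg hg'.isCoboundedUnder_le h.isBoundedUnder_le h.isBoundedUnder_ge

theorem liminf_eq_liminf_of_tendsto_sub (hg : IsBoundedUnder (· ≤ ·) l g)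
    (hg' : IsBoundedUnder (· ≥ ·) l g) (h : Tendsto (f - g) l (𝓝 0)) :
    liminf f l = liminf g l := by
  have hf : f = (f - g) + g := by abel
  rw [hf]
  refine le_antisymm ?_ ?_
  · calc liminf ((f - g) + g) l ≤ limsup (f - g) l + liminf g l :=
          liminf_add_le h.isBoundedUnder_ge h.isBoundedUnder_le hg' hg.isCoboundedUnder_ge
      _ = liminf g l := by rw [h.limsup_eq, zero_add]
  · calc liminf g l = liminf (f - g) l + liminf g l := by rw [h.liminf_eq, zero_add]
      _ ≤ liminf ((f - g) + g) l :=
          le_liminf_add h.isBoundedUnder_ge h.isBoundedUnder_le hg' hg.isCoboundedUnder_ge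

end Limits

theorem tendsto_div_natCast_sub_div_natCast_of_abs_sub_le {a b : ℕ → ℝ} {K : ℝ}
    (h : ∀ n, |a n - b n| ≤ K) :
    Tendsto (fun n : ℕ => a n / n - b n / n) atTop (𝓝 0) := by
  refine squeeze_zero_norm (fun n => ?_) (tendsto_const_div_atTop_nhds_zero_nat K)
  rw [← sub_div, norm_div, Real.norm_eq_abs, Real.norm_natCast]
  exact div_le_div_of_nonneg_right (h n) n.cast_nonneg

theorem limsup_angSum_eq_of_geometric_closeness_general {d : ℕ}
    (A : ℕ → (Euc d →L[ℝ] Euc d)) (hA : ∀ n, IsUnit (A n))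
    (s : ℕ) (V W : Submodule ℝ (Euc d))
    (hV : Module.finrank ℝ V = s) (hW : Module.finrank ℝ W = s)
    (C q : ℝ) (hq0 : 0 ≤ q) (hq1 : q < 1) (J : ℕ)
    (hclose : ∀ j : ℕ, J ≤ j →
      subAngle (V.map (Phi A j 0 : Euc d →ₗ[ℝ] Euc d)) (W.map (Phi A j 0 : Euc d →ₗ[ℝ] Euc d)) ≤ C * q ^ j) :
    limsup (fun n : ℕ => angSum A V 1 n / n) atTop =
      limsup (fun n : ℕ => angSum A W 1 n / n) atTop ∧
    liminf (fun n : ℕ => angSum A V 1 n / n) atTop =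
      liminf (fun n : ℕ => angSum A W 1 n / n) atTop := by
  obtain rfl | hs := eq_or_ne s 0
  · obtain rfl := Submodule.finrank_eq_zero.1 hV
    obtain rfl := Submodule.finrank_eq_zero.1 hW
    exact ⟨rfl, rfl⟩
  have hrank : ∀ (U : Submodule ℝ (Euc d)), Module.finrank ℝ U = s → ∀ j,
      Module.finrank ℝ (U.map (Phi A j 0 : Euc d →ₗ[ℝ] Euc d)) = s :=
    fun U hU j => (Submodule.finrank_map_of_isUnit (isUnit_Phi hA j 0) U).trans hU
  have hne : ∀ {U : Submodule ℝ (Euc d)}, Module.finrank ℝ U = s → U ≠ ⊥ :=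
    fun hU hbot => hs (by rw [← hU, hbot, finrank_bot])
  have hsum : Summable fun j => subAngle (V.map (Phi A j 0 : Euc d →ₗ[ℝ] Euc d))
      (W.map (Phi A j 0 : Euc d →ₗ[ℝ] Euc d)) :=
    ((summable_geometric_of_lt_one hq0 hq1).mul_left C).of_norm_bounded_eventually_nat
      (eventually_atTop.2 ⟨J, fun j hj =>
        (Real.norm_of_nonneg (subAngle_nonneg _ _)).trans_le (hclose j hj)⟩)
  have htend := tendsto_div_natCast_sub_div_natCast_of_abs_sub_le (abs_sum_subAngle_sub_le
    (fun j => hne (hrank V hV j)) (fun j => hne (hrank W hW j))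
    (fun j => (hrank V hV j).trans (hrank W hW j).symm) hsum)
  have hbdd : IsBoundedUnder (· ≤ ·) atTop fun n : ℕ => angSum A W 1 n / n :=
    isBoundedUnder_of ⟨Real.pi, angSum_one_div_le_pi A W⟩
  have hbdd' : IsBoundedUnder (· ≥ ·) atTop fun n : ℕ => angSum A W 1 n / n :=
    isBoundedUnder_of ⟨0, fun n => div_nonneg (angSum_nonneg A W 1 n) n.cast_nonneg⟩
  exact ⟨limsup_eq_limsup_of_tendsto_sub hbdd hbdd' htend,
    liminf_eq_liminf_of_tendsto_sub hbdd hbdd' htend⟩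

/-- If the angles between the iterates of two `s`-dimensional subspaces `V`
and `W` decay geometrically, then the averaged angle sums of `V` and `W` have the same
`limsup` and the same `liminf`. -/
theorem limsup_angSum_eq_of_geometric_closeness {d : ℕ}
    (A : ℕ → (Euc d →L[ℝ] Euc d)) (hA : ∀ n, IsUnit (A n))
    (s : ℕ) (V W : Submodule ℝ (Euc d))
    (hV : Module.finrank ℝ V = s) (hW : Module.finrank ℝ W = s)
    (C q : ℝ) (hC : 0 ≤ C) (hq0 : 0 ≤ q) (hq1 : q < 1) (J : ℕ)
    (hclose : ∀ j : ℕ, J ≤ j →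
      subAngle (V.map (Phi A j 0 : Euc d →ₗ[ℝ] Euc d)) (W.map (Phi A j 0 : Euc d →ₗ[ℝ] Euc d)) ≤ C * q ^ j) :
    limsup (fun n : ℕ => angSum A V 1 n / n) atTop =
      limsup (fun n : ℕ => angSum A W 1 n / n) atTop ∧
    liminf (fun n : ℕ => angSum A V 1 n / n) atTop =
      liminf (fun n : ℕ => angSum A W 1 n / n) atTop :=
  limsup_angSum_eq_of_geometric_closeness_general A hA s V W hV hW C q hq0 hq1 J hclose
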